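/- arXiv:1908.06397 — 3 statements merged into one kernel-verified Lean document; each statement's English description precedes it below -/
import Mathlib

section
/- A bounded convex (2, η)-type domain Ω ⊂ ℝⁿ satisfies the exterior sphere condition with radius R = max{1/η, diam Ω}. -/
/-- `Ω` satisfies the exterior sphere condition with radius `R`. -/
def ExteriorSphereCondition {n : ℕ} (Ω : Set (EuclideanSpace ℝ (Fin n))) (R : ℝ) : Prop :=
  ∀ x ∈ frontier Ω, ∃ y : EuclideanSpace ℝ (Fin n),
    Ω ⊆ Metric.ball y R ∧ x ∈ Metric.sphere y R

lemma dist_lt_diam_of_mem_open {n : ℕ} {Ω : Set (EuclideanSpace ℝ (Fin n))}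
    (hΩo : IsOpen Ω) (hΩb : Bornology.IsBounded Ω)
    {x x₀ : EuclideanSpace ℝ (Fin n)} (hx : x ∈ Ω) (hx₀ : x₀ ∈ closure Ω) (hne : x ≠ x₀) :
    dist x x₀ < Metric.diam Ω := by
  obtain ⟨r, hr, hball⟩ := Metric.isOpen_iff.1 hΩo x hx
  set u := x - x₀ with hu_def
  have hu : u ≠ 0 := sub_ne_zero.2 hne
  have hun : 0 < ‖u‖ := norm_pos_iff.2 hu
  set c : ℝ := r / 2 / ‖u‖ with hc_def
  have hc : 0 < c := by positivity
  set z := x + c • u with hz_def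
  have hzΩ : z ∈ Ω := by
    apply hball
    have : dist z x = c * ‖u‖ := by
      simp [hz_def, dist_eq_norm, norm_smul, abs_of_pos hc]
    rw [Metric.mem_ball, this, hc_def, div_mul_cancel₀ _ (ne_of_gt hun)]
    linarith
  have hzx₀ : dist z x₀ = ‖u‖ + r / 2 := by
    have h1 : z - x₀ = (1 + c) • u := by
      rw [hz_def, hu_def]
      module
    rw [dist_eq_norm, h1, norm_smul, Real.norm_eq_abs, abs_of_pos (by linarith : (0:ℝ) < 1 + c), hc_def]
    field_simp
  have hle : dist z x₀ ≤ Metric.diam Ω := by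
    rw [← Metric.diam_closure]
    exact Metric.dist_le_diam_of_mem hΩb.closure (subset_closure hzΩ) hx₀
  have : dist x x₀ = ‖u‖ := by rw [dist_eq_norm]
  rw [this]
  linarith [hzx₀ ▸ hle]

theorem two_type_implies_exterior_sphere
    {n : ℕ} (hn : 2 ≤ n) (Ω : Set (EuclideanSpace ℝ (Fin n)))
    (hΩo : IsOpen Ω) (hΩc : Convex ℝ Ω) (hΩb : Bornology.IsBounded Ω)
    (hne : Ω.Nonempty)
    (η : ℝ) (hη : 0 < η)
    (htype : ∀ x₀ ∈ frontier Ω,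
      ∃ f : EuclideanSpace ℝ (Fin n) ≃ᵢ EuclideanSpace ℝ (Fin n),
        f x₀ = 0 ∧
        ∀ x ∈ Ω,
          η * (Real.sqrt (∑ i ∈ Finset.univ.erase (⟨n - 1, by omega⟩ : Fin n), (f x i) ^ 2)) ^ (2 : ℝ)
            ≤ f x ⟨n - 1, by omega⟩) :
    ExteriorSphereCondition Ω (max (1 / η) (Metric.diam Ω)) := by
  intro x₀ hx₀
  obtain ⟨f, hf0, hf⟩ := htype x₀ hx₀
  set R := max (1 / η) (Metric.diam Ω) with hR_def
  have hRη : 1 / η ≤ R := le_max_left _ _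
  have hRd : Metric.diam Ω ≤ R := le_max_right _ _
  have hRpos : 0 < R := lt_of_lt_of_le (by positivity) hRη
  have hx₀Ω : x₀ ∉ Ω := (hΩo.frontier_eq ▸ hx₀).2
  set i : Fin n := ⟨n - 1, by omega⟩ with hi_def
  set e : EuclideanSpace ℝ (Fin n) := EuclideanSpace.single i R with he_def
  refine ⟨f.symm e, ?_, ?_⟩
  · intro x hx
    have hdx : dist x (f.symm e) = dist (f x) e := by
      rw [← IsometryEquiv.dist_eq f, IsometryEquiv.apply_symm_apply]
    set v := f x with hv_def
    set t : ℝ := v i with ht_def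
    set S : ℝ := ∑ j ∈ Finset.univ.erase i, (v j) ^ 2 with hS_def
    have hS0 : 0 ≤ S := Finset.sum_nonneg fun j _ => sq_nonneg _
    have hηS : η * S ≤ t := by
      have h := hf x hx
      rwa [show ((2:ℝ)) = ((2:ℕ):ℝ) by norm_num, Real.rpow_natCast,
        Real.sq_sqrt hS0] at h
    have ht0 : 0 ≤ t := le_trans (by positivity) hηS
    have hxne : x ≠ x₀ := fun h => hx₀Ω (h ▸ hx)
    have htpos : 0 < t := by
      rcases lt_or_eq_of_le ht0 with h | h
      · exact h
      · exfalso
        have hS : S = 0 := by nlinarith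
        have hv0 : v = 0 := by
          ext j
          by_cases hji : j = i
          · rw [hji]; exact h.symm
          · have hmem : j ∈ Finset.univ.erase i := Finset.mem_erase.2 ⟨hji, Finset.mem_univ j⟩
            have := Finset.single_le_sum (f := fun j => (v j)^2)
              (fun k _ => sq_nonneg (v k)) hmem
            have : (v j)^2 = 0 := le_antisymm (hS ▸ this) (sq_nonneg _)
            exact pow_eq_zero_iff (by norm_num) |>.1 this
        exact hxne (f.injective (by rw [hv0] at hv_def; rw [← hv_def, hf0]))
    have htnorm : t ≤ ‖v‖ := by
      have h1 : t ^ 2 ≤ ∑ j, (v j) ^ 2 :=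
        Finset.single_le_sum (f := fun j => (v j)^2) (fun k _ => sq_nonneg (v k))
          (Finset.mem_univ i)
      have h2 : ‖v‖ = Real.sqrt (∑ j, (v j) ^ 2) := by
        rw [EuclideanSpace.norm_eq]
        congr 1
        exact Finset.sum_congr rfl fun j _ => by rw [Real.norm_eq_abs, sq_abs]
      calc t ≤ |t| := le_abs_self t
        _ = Real.sqrt (t ^ 2) := (Real.sqrt_sq_eq_abs t).symm
        _ ≤ Real.sqrt (∑ j, (v j) ^ 2) := Real.sqrt_le_sqrt h1
        _ = ‖v‖ := h2.symm
    have hvd : ‖v‖ = dist x x₀ := by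
      rw [show ‖v‖ = dist v 0 by simp, hv_def, ← hf0, IsometryEquiv.dist_eq]
    have htR : t < R := by
      have := dist_lt_diam_of_mem_open hΩo hΩb hx
        (frontier_subset_closure hx₀) hxne
      linarith [hvd ▸ htnorm]
    have hηR : 1 ≤ η * R := by
      rw [div_le_iff₀ hη] at hRη
      linarith
    have hsum : ∑ j, (v j - e j) ^ 2 = (t - R) ^ 2 + S := by
      rw [← Finset.add_sum_erase _ _ (Finset.mem_univ i)]
      congr 1
      · rw [he_def, EuclideanSpace.single_apply, if_pos rfl]
      · exact Finset.sum_congr rfl fun j hj => by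
          rw [he_def, EuclideanSpace.single_apply, if_neg (Finset.mem_erase.1 hj).1,
            sub_zero]
    have hlt : (t - R) ^ 2 + S < R ^ 2 := by nlinarith
    rw [Metric.mem_ball, hdx, EuclideanSpace.dist_eq, Real.sqrt_lt' hRpos]
    calc ∑ j, dist (v j) (e j) ^ 2 = ∑ j, (v j - e j) ^ 2 :=
          Finset.sum_congr rfl fun j _ => by rw [Real.dist_eq, sq_abs]
      _ < R ^ 2 := hsum ▸ hlt
  · rw [Metric.mem_sphere, ← IsometryEquiv.dist_eq f, IsometryEquiv.apply_symm_apply,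
      hf0, he_def]
    simp [abs_of_pos hRpos]
end

section
/- Suppose Ω ⊂ ℝⁿ is a bounded convex domain satisfying the exterior sphere condition with radius R, and u ∈ C(Ω̄) ∩ C^∞(Ω) is the concave solution of the Dirichlet problem Δu − (u_i u_j)/(1+|∇u|²) u_{ij} + n/u = 0 in Ω, u = 0 on ∂Ω, u > 0 in Ω. Then u(y) ≤ √(2R)·dist(y, ∂Ω)^{1/2} for every y ∈ Ω. -/
/-- First partial derivative of `u` in the `i`-th coordinate direction. -/
noncomputable def pd {n : ℕ} (u : EuclideanSpace ℝ (Fin n) → ℝ) (i : Fin n)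
    (x : EuclideanSpace ℝ (Fin n)) : ℝ :=
  fderiv ℝ u x (EuclideanSpace.single i 1)

/-- Second partial derivative `u_{ij}`. -/
noncomputable def pd2 {n : ℕ} (u : EuclideanSpace ℝ (Fin n) → ℝ) (i j : Fin n)
    (x : EuclideanSpace ℝ (Fin n)) : ℝ :=
  fderiv ℝ (fun y => fderiv ℝ u y (EuclideanSpace.single j 1)) x (EuclideanSpace.single i 1)

/-- The hyperbolic minimal graph operator
`F[u] = Δu − Σ_{i,j} u_i u_j u_{ij}/(1+|∇u|²) + n/u`. -/
noncomputable def FHMG {n : ℕ} (u : EuclideanSpace ℝ (Fin n) → ℝ)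
    (x : EuclideanSpace ℝ (Fin n)) : ℝ :=
  (∑ i, pd2 u i i x)
    - (∑ i, ∑ j, pd u i x * pd u j x * pd2 u i j x) / (1 + ∑ i, (pd u i x) ^ 2)
    + n / u x

open Filter Real


/-- 1D second-derivative test at an interior local max. -/
lemma second_deriv_nonpos_of_isLocalMax {g : ℝ → ℝ}
    (hd : ∀ᶠ t in nhds (0:ℝ), DifferentiableAt ℝ g t)
    (hd2 : DifferentiableAt ℝ (deriv g) 0)
    (hmax : IsLocalMax g 0) : deriv (deriv g) 0 ≤ 0 := by
  by_contra hc
  push_neg at hc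
  have h0 : deriv g 0 = 0 := hmax.deriv_eq_zero
  have hda : HasDerivAt (deriv g) (deriv (deriv g) 0) 0 := hd2.hasDerivAt
  have hslope := hasDerivAt_iff_tendsto_slope.1 hda
  have hev : ∀ᶠ t in nhdsWithin (0:ℝ) (Set.Ioi 0), 0 < deriv g t := by
    have h1 : ∀ᶠ t in nhdsWithin (0:ℝ) {(0:ℝ)}ᶜ, 0 < slope (deriv g) 0 t :=
      hslope.eventually (eventually_gt_nhds hc)
    have h2 : ∀ᶠ t in nhdsWithin (0:ℝ) (Set.Ioi 0), 0 < slope (deriv g) 0 t :=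
      h1.filter_mono (nhdsWithin_mono 0 (fun t ht => ne_of_gt ht))
    filter_upwards [h2, self_mem_nhdsWithin] with t ht ht0
    have hts : slope (deriv g) 0 t = deriv g t / t := by
      simp [slope_def_field, h0]
    rw [hts] at ht
    have := mul_pos ht (show (0:ℝ) < t from ht0)
    rwa [div_mul_cancel₀] at this
    exact ne_of_gt ht0
  obtain ⟨ε, hε, hIoo⟩ := (mem_nhdsGT_iff_exists_Ioo_subset).1 hev
  have hε' : (0:ℝ) < ε := hε
  obtain ⟨ε₂, hε₂, hball⟩ := Metric.eventually_nhds_iff_ball.1 (hd.and hmax)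
  set δ : ℝ := min (ε/2) (ε₂/2) with hδdef
  have hδpos : 0 < δ := lt_min (by linarith) (by linarith)
  have hδε : δ < ε := lt_of_le_of_lt (min_le_left _ _) (by linarith)
  have hδε₂ : δ < ε₂ := lt_of_le_of_lt (min_le_right _ _) (by linarith)
  have hsub : Set.Icc (0:ℝ) δ ⊆ Metric.ball (0:ℝ) ε₂ := by
    intro t ht
    rw [Metric.mem_ball, Real.dist_eq, sub_zero, abs_of_nonneg ht.1]
    exact lt_of_le_of_lt ht.2 hδε₂
  have hcont : ContinuousOn g (Set.Icc 0 δ) := fun t ht =>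
    ((hball t (hsub ht)).1.continuousAt).continuousWithinAt
  have hderiv : ∀ t ∈ interior (Set.Icc (0:ℝ) δ), 0 < deriv g t := by
    intro t ht
    rw [interior_Icc] at ht
    exact hIoo ⟨ht.1, lt_trans ht.2 hδε⟩
  have hmono : StrictMonoOn g (Set.Icc 0 δ) :=
    strictMonoOn_of_deriv_pos (convex_Icc 0 δ) hcont hderiv
  have h1 : g 0 < g δ := hmono (Set.left_mem_Icc.2 hδpos.le) (Set.right_mem_Icc.2 hδpos.le) hδpos
  have h2 : g δ ≤ g 0 := (hball δ (hsub (Set.right_mem_Icc.2 hδpos.le))).2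
  linarith

lemma pd_clm_linearity {n : ℕ} (L : EuclideanSpace ℝ (Fin n) →L[ℝ] ℝ) (v : Fin n → ℝ) :
    L (∑ i, v i • EuclideanSpace.single i (1:ℝ)) = ∑ i, v i * L (EuclideanSpace.single i 1) := by
  rw [map_sum]; exact Finset.sum_congr rfl fun i _ => by rw [map_smul, smul_eq_mul]

lemma pd_differentiableAt {f : EuclideanSpace ℝ (Fin n) → ℝ} {x : EuclideanSpace ℝ (Fin n)}
    (hf : ContDiffAt ℝ 2 f x) (i : Fin n) :
    DifferentiableAt ℝ (fun y => fderiv ℝ f y (EuclideanSpace.single i 1)) x := by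
  have h1 : ContDiffAt ℝ 1 (fderiv ℝ f) x := hf.fderiv_right (by norm_num)
  exact (h1.clm_apply contDiffAt_const).differentiableAt (by norm_num)

/-- Quadratic form of the second partial derivatives at an interior local max is ≤ 0. -/
lemma quadform_nonpos_of_isLocalMax {φ : EuclideanSpace ℝ (Fin n) → ℝ}
    {x₀ : EuclideanSpace ℝ (Fin n)} (hφ : ContDiffAt ℝ 2 φ x₀) (hmax : IsLocalMax φ x₀)
    (v : Fin n → ℝ) :
    ∑ i, v i * ∑ j, v j *
      (fderiv ℝ (fun y => fderiv ℝ φ y (EuclideanSpace.single i 1)) x₀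
        (EuclideanSpace.single j 1)) ≤ 0 := by
  classical
  set D : EuclideanSpace ℝ (Fin n) := ∑ i, v i • EuclideanSpace.single i (1:ℝ) with hD
  set L : ℝ → EuclideanSpace ℝ (Fin n) := fun t => x₀ + t • D with hLdef
  have hL : ∀ t : ℝ, HasDerivAt L D t := by
    intro t
    have h1 : HasDerivAt (fun s : ℝ => s • D) ((1:ℝ) • D) t := (hasDerivAt_id t).smul_const D
    have h2 := h1.const_add x₀
    rw [one_smul] at h2
    exact h2
  have hLcont : Continuous L := by
    have := fun t => (hL t).continuousAt
    exact continuous_iff_continuousAt.2 this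
  have hL0 : L 0 = x₀ := by simp [hLdef]
  have hLtendsto : Tendsto L (nhds 0) (nhds x₀) := by
    simpa [hL0] using (hLcont.tendsto 0)
  -- eventual C² and differentiability near x₀ pulled back to the line
  have hev : ∀ᶠ y in nhds x₀, ContDiffAt ℝ 2 φ y := hφ.eventually (by simp)
  have hevL : ∀ᶠ t in nhds (0:ℝ), ContDiffAt ℝ 2 φ (L t) := hLtendsto.eventually hev
  set G : ℝ → ℝ := fun t => φ (L t) with hGdef
  have hGd : ∀ᶠ t in nhds (0:ℝ), HasDerivAt G (fderiv ℝ φ (L t) D) t := by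
    filter_upwards [hevL] with t ht
    exact (ht.differentiableAt (by norm_num)).hasFDerivAt.comp_hasDerivAt t (hL t)
  -- the candidate first derivative function
  set G1 : ℝ → ℝ := fun t => fderiv ℝ φ (L t) D with hG1def
  have hderivG : deriv G =ᶠ[nhds (0:ℝ)] G1 := by
    filter_upwards [hGd] with t ht using ht.deriv
  -- A := y ↦ fderiv φ y D is differentiable at x₀ with known derivative
  have hAi : ∀ i, DifferentiableAt ℝ (fun y => fderiv ℝ φ y (EuclideanSpace.single i 1)) x₀ :=
    fun i => pd_differentiableAt hφ i
  have hAsum : HasFDerivAt (fun y => ∑ i, v i * fderiv ℝ φ y (EuclideanSpace.single i 1))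
      (∑ i, v i • fderiv ℝ (fun y => fderiv ℝ φ y (EuclideanSpace.single i 1)) x₀) x₀ := by
    apply HasFDerivAt.fun_sum
    intro i _
    exact ((hAi i).hasFDerivAt).const_mul (v i)
  have hAeq : (fun y => fderiv ℝ φ y D)
      = (fun y => ∑ i, v i * fderiv ℝ φ y (EuclideanSpace.single i 1)) := by
    funext y
    exact pd_clm_linearity (fderiv ℝ φ y) v
  have hA : HasFDerivAt (fun y => fderiv ℝ φ y D)
      (∑ i, v i • fderiv ℝ (fun y => fderiv ℝ φ y (EuclideanSpace.single i 1)) x₀) x₀ := by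
    rw [hAeq]; exact hAsum
  have hG1 : HasDerivAt G1
      ((∑ i, v i • fderiv ℝ (fun y => fderiv ℝ φ y (EuclideanSpace.single i 1)) x₀) D) 0 := by
    have hA' : HasFDerivAt (fun y => fderiv ℝ φ y D)
        (∑ i, v i • fderiv ℝ (fun y => fderiv ℝ φ y (EuclideanSpace.single i 1)) x₀) (L 0) := by
      rwa [hL0]
    exact hA'.comp_hasDerivAt 0 (hL 0)
  -- local max of G at 0
  have hGmax : IsLocalMax G 0 := by
    have h := hLtendsto.eventually hmax
    unfold IsLocalMax IsMaxFilter
    simpa [hGdef, hL0] using h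
  -- apply the 1D lemma
  have hd : ∀ᶠ t in nhds (0:ℝ), DifferentiableAt ℝ G t := by
    filter_upwards [hGd] with t ht using ht.differentiableAt
  have hd2 : DifferentiableAt ℝ (deriv G) 0 := by
    rw [Filter.EventuallyEq.differentiableAt_iff hderivG]
    exact hG1.differentiableAt
  have hkey := second_deriv_nonpos_of_isLocalMax hd hd2 hGmax
  have hdd : deriv (deriv G) 0 = deriv G1 0 := hderivG.deriv_eq
  rw [hdd, hG1.deriv] at hkey
  -- now compute the value
  have hval : (∑ i, v i • fderiv ℝ (fun y => fderiv ℝ φ y (EuclideanSpace.single i 1)) x₀) D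
      = ∑ i, v i * ∑ j, v j *
        (fderiv ℝ (fun y => fderiv ℝ φ y (EuclideanSpace.single i 1)) x₀
          (EuclideanSpace.single j 1)) := by
    rw [ContinuousLinearMap.sum_apply]
    apply Finset.sum_congr rfl
    intro i _
    rw [ContinuousLinearMap.smul_apply, smul_eq_mul]
    congr 1
    exact pd_clm_linearity _ v
  rwa [hval] at hkey

lemma trace_ineq_of_quadform_nonpos {M : Fin n → Fin n → ℝ} {p : Fin n → ℝ}
    (h : ∀ v : Fin n → ℝ, ∑ i, v i * ∑ j, v j * M j i ≤ 0) :
    (∑ i, M i i) - (∑ i, ∑ j, p i * p j * M i j) / (1 + ∑ i, p i ^ 2) ≤ 0 := by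
  classical
  set T : ℝ := ∑ i, M i i with hT
  set S : ℝ := ∑ i, p i ^ 2 with hS
  set Q : ℝ := ∑ i, ∑ j, p i * p j * M i j with hQ
  have hSnn : 0 ≤ S := Finset.sum_nonneg fun i _ => sq_nonneg _
  have h1S : 0 < 1 + S := by linarith
  have hdiag : ∀ i, M i i ≤ 0 := by
    intro i
    have := h (fun k => if k = i then 1 else 0)
    simpa [Finset.sum_ite_eq', Finset.mem_univ] using this
  have hTnp : T ≤ 0 := Finset.sum_nonpos fun i _ => hdiag i
  have hoff : ∀ i j, i ≠ j → ∀ x : ℝ,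
      0 ≤ (-M i i) * (x * x) + (-(M i j) - M j i) * x + (-M j j) := by
    intro i j hij x
    have hv := h (fun k => if k = i then x else if k = j then 1 else 0)
    have key : ∀ (k : Fin n) (c : ℝ),
        (∑ l, (if l = i then x else if l = j then 1 else 0) * c * M l k)
          = x * c * M i k + c * M j k := by
      intro k c
      have h1 : ∀ l, (if l = i then x else if l = j then 1 else 0) * c * M l k
          = (if l = i then x * c * M i k else 0) + (if l = j then c * M j k else 0) := by
        intro l
        rcases eq_or_ne l i with rfl | hli
        · simp [hij]
        · rcases eq_or_ne l j with rfl | hlj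
          · simp [hli]
          · simp [hli, hlj]
      simp only [h1, Finset.sum_add_distrib, Finset.sum_ite_eq', Finset.mem_univ, if_true]
    have key1 : ∀ (k : Fin n),
        (∑ l, (if l = i then x else if l = j then 1 else 0) * M l k)
          = x * M i k + M j k := by
      intro k
      have := key k 1
      simpa using this
    have hsum : ∑ k, (if k = i then x else if k = j then 1 else 0) *
        ∑ l, (if l = i then x else if l = j then 1 else 0) * M l k
        = x * (x * M i i + M j i) + (x * M i j + M j j) := by
      simp only [key1]
      have h1 : ∀ k, (if k = i then x else if k = j then 1 else 0) * (x * M i k + M j k)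
          = (if k = i then x * (x * M i i + M j i) else 0)
            + (if k = j then (x * M i j + M j j) else 0) := by
        intro k
        rcases eq_or_ne k i with rfl | hki
        · simp [hij]
        · rcases eq_or_ne k j with rfl | hkj
          · simp [hki]
          · simp [hki, hkj]
      simp only [h1, Finset.sum_add_distrib, Finset.sum_ite_eq', Finset.mem_univ, if_true]
    rw [hsum] at hv
    nlinarith [hv]
  have hdisc : ∀ i j, i ≠ j → discrim (-M i i) (-(M i j) - M j i) (-M j j) ≤ 0 :=
    fun i j hij => discrim_le_zero (hoff i j hij)
  set a : Fin n → ℝ := fun i => |p i| * Real.sqrt (-M i i) with ha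
  have hbound : ∀ i j, -(p i * p j * (M i j + M j i)) ≤ 2 * (a i * a j) := by
    intro i j
    rcases eq_or_ne i j with rfl | hij
    · have h1 : Real.sqrt (-M i i) * Real.sqrt (-M i i) = -M i i :=
        Real.mul_self_sqrt (by linarith [hdiag i])
      simp only [ha]
      nlinarith [sq_nonneg (p i), sq_abs (p i), h1]
    · have hd := hdisc i j hij
      rw [discrim] at hd
      have h1 : (M i j + M j i) ^ 2 ≤ 4 * ((-M i i) * (-M j j)) := by nlinarith [hd]
      have h2 : |M i j + M j i| ≤ 2 * (Real.sqrt (-M i i) * Real.sqrt (-M j j)) := by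
        have h3 : Real.sqrt ((M i j + M j i) ^ 2) ≤ Real.sqrt (4 * ((-M i i) * (-M j j))) :=
          Real.sqrt_le_sqrt h1
        rw [Real.sqrt_sq_eq_abs] at h3
        rw [show (4 : ℝ) * ((-M i i) * (-M j j)) = 2 ^ 2 * ((-M i i) * (-M j j)) by ring,
          Real.sqrt_mul (by positivity), Real.sqrt_sq (by norm_num),
          Real.sqrt_mul (by linarith [hdiag i])] at h3
        linarith [h3]
      calc -(p i * p j * (M i j + M j i)) ≤ |p i * p j * (M i j + M j i)| := neg_le_abs _
        _ = |p i * p j| * |M i j + M j i| := abs_mul _ _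
        _ ≤ |p i * p j| * (2 * (Real.sqrt (-M i i) * Real.sqrt (-M j j))) :=
            mul_le_mul_of_nonneg_left h2 (abs_nonneg _)
        _ = 2 * (a i * a j) := by simp only [ha, abs_mul]; ring
  have hQsymm : ∑ i, ∑ j, p i * p j * M j i = Q := by
    rw [hQ, Finset.sum_comm]
    exact Finset.sum_congr rfl fun i _ => Finset.sum_congr rfl fun j _ => by ring
  have hsq : (∑ i, a i) * (∑ j, a j) ≤ S * (-T) := by
    have hcs := Finset.sum_mul_sq_le_sq_mul_sq Finset.univ (fun i => |p i|)
      (fun i => Real.sqrt (-M i i))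
    have e1 : ∑ i, |p i| ^ 2 = S := by
      simp [sq_abs, hS]
    have e2 : ∑ i, Real.sqrt (-M i i) ^ 2 = -T := by
      rw [hT, ← Finset.sum_neg_distrib]
      exact Finset.sum_congr rfl fun i _ => Real.sq_sqrt (by linarith [hdiag i])
    calc (∑ i, a i) * (∑ j, a j) = (∑ i, a i) ^ 2 := by ring
      _ ≤ (∑ i, |p i| ^ 2) * (∑ i, Real.sqrt (-M i i) ^ 2) := hcs
      _ = S * (-T) := by rw [e1, e2]
  have hQST : S * T ≤ Q := by
    have hstep : -(2 * Q) ≤ 2 * (S * (-T)) := by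
      have e1 : -(2 * Q) = ∑ i, ∑ j, -(p i * p j * (M i j + M j i)) := by
        have hsplit : ∀ i : Fin n, ∑ j, -(p i * p j * (M i j + M j i))
            = ∑ j, ((-(p i * p j * M i j)) + (-(p i * p j * M j i))) :=
          fun i => Finset.sum_congr rfl fun j _ => by ring
        simp only [hsplit, Finset.sum_add_distrib, Finset.sum_neg_distrib]
        rw [← hQ, hQsymm]
        ring
      have e2 : ∑ i, ∑ j, -(p i * p j * (M i j + M j i)) ≤ ∑ i, ∑ j, 2 * (a i * a j) :=
        Finset.sum_le_sum fun i _ => Finset.sum_le_sum fun j _ => hbound i j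
      have e3 : ∑ i, ∑ j, 2 * (a i * a j) = 2 * ((∑ i, a i) * (∑ j, a j)) := by
        rw [Finset.sum_mul_sum]
        simp only [Finset.mul_sum]
      calc -(2 * Q) = ∑ i, ∑ j, -(p i * p j * (M i j + M j i)) := e1
        _ ≤ ∑ i, ∑ j, 2 * (a i * a j) := e2
        _ = 2 * ((∑ i, a i) * (∑ j, a j)) := e3
        _ ≤ 2 * (S * (-T)) := by linarith [hsq]
    linarith
  rw [sub_nonpos, div_eq_inv_mul, ← sub_nonneg]
  have : (1 + S)⁻¹ * Q - T = (1 + S)⁻¹ * (Q - (1 + S) * T) := by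
    field_simp
  rw [this]
  apply mul_nonneg (by positivity)
  nlinarith [hQST, hTnp]

variable {n : ℕ}

lemma proj_single (i j : Fin n) :
    (EuclideanSpace.proj i : EuclideanSpace ℝ (Fin n) →L[ℝ] ℝ)
      (EuclideanSpace.single j 1) = if i = j then 1 else 0 := by
  simp [PiLp.proj_apply, EuclideanSpace.single_apply]

section W
variable (z : EuclideanSpace ℝ (Fin n)) (c : ℝ)

lemma hasFDerivAt_qsum (x : EuclideanSpace ℝ (Fin n)) :
    HasFDerivAt (fun y : EuclideanSpace ℝ (Fin n) => ∑ i, (y i - z i) ^ 2)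
      (∑ i, (2 * (x i - z i)) • (EuclideanSpace.proj i :
        EuclideanSpace ℝ (Fin n) →L[ℝ] ℝ)) x := by
  apply HasFDerivAt.fun_sum
  intro i _
  have h1 : HasDerivAt (fun t : ℝ => (t - z i) ^ 2) (2 * (x i - z i)) (x i) := by
    have := ((hasDerivAt_id (x i)).sub_const (z i)).fun_pow 2
    simpa using this
  have h2 : HasFDerivAt (fun y : EuclideanSpace ℝ (Fin n) => y i) (EuclideanSpace.proj i :
      EuclideanSpace ℝ (Fin n) →L[ℝ] ℝ) x := by
    have h := (EuclideanSpace.proj (𝕜 := ℝ) (i := i)).hasFDerivAt (x := x)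
    exact h
  have := h1.comp_hasFDerivAt x h2
  exact this

/-- derivative of the barrier `W y = √(c - ∑ (y i - z i)²)`. -/
lemma hasFDerivAt_W {x : EuclideanSpace ℝ (Fin n)}
    (hx : 0 < c - ∑ i, (x i - z i) ^ 2) :
    HasFDerivAt (fun y : EuclideanSpace ℝ (Fin n) =>
        Real.sqrt (c - ∑ i, (y i - z i) ^ 2))
      ((1 / (2 * Real.sqrt (c - ∑ i, (x i - z i) ^ 2))) •
        (∑ i, (-(2 * (x i - z i))) • (EuclideanSpace.proj i :
          EuclideanSpace ℝ (Fin n) →L[ℝ] ℝ))) x := by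
  have hg : HasFDerivAt (fun y : EuclideanSpace ℝ (Fin n) => c - ∑ i, (y i - z i) ^ 2)
      (∑ i, (-(2 * (x i - z i))) • (EuclideanSpace.proj i :
        EuclideanSpace ℝ (Fin n) →L[ℝ] ℝ)) x := by
    have := (hasFDerivAt_qsum z x).const_sub c
    have heq : -(∑ i, (2 * (x i - z i)) • (EuclideanSpace.proj i :
        EuclideanSpace ℝ (Fin n) →L[ℝ] ℝ))
        = ∑ i, (-(2 * (x i - z i))) • (EuclideanSpace.proj i :
          EuclideanSpace ℝ (Fin n) →L[ℝ] ℝ) := by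
      rw [← Finset.sum_neg_distrib]
      exact Finset.sum_congr rfl fun i _ => (neg_smul _ _).symm
    rwa [heq] at this
  exact (Real.hasDerivAt_sqrt (ne_of_gt hx)).comp_hasFDerivAt x hg

lemma pd_W {x : EuclideanSpace ℝ (Fin n)} (hx : 0 < c - ∑ i, (x i - z i) ^ 2) (j : Fin n) :
    pd (fun y : EuclideanSpace ℝ (Fin n) => Real.sqrt (c - ∑ i, (y i - z i) ^ 2)) j x
      = -(x j - z j) / Real.sqrt (c - ∑ i, (x i - z i) ^ 2) := by
  rw [pd, (hasFDerivAt_W z c hx).fderiv]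
  rw [ContinuousLinearMap.smul_apply, ContinuousLinearMap.sum_apply]
  have : ∀ i : Fin n, ((-(2 * (x i - z i))) • (EuclideanSpace.proj i :
      EuclideanSpace ℝ (Fin n) →L[ℝ] ℝ)) (EuclideanSpace.single j 1)
      = (if i = j then -(2 * (x j - z j)) else 0) := by
    intro i
    rw [ContinuousLinearMap.smul_apply, proj_single, smul_eq_mul]
    rcases eq_or_ne i j with rfl | hij
    · simp
    · simp [hij]
  rw [Finset.sum_congr rfl fun i _ => this i, Finset.sum_ite_eq']
  simp only [Finset.mem_univ, if_true, smul_eq_mul]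
  have hW : Real.sqrt (c - ∑ i, (x i - z i) ^ 2) ≠ 0 :=
    ne_of_gt (Real.sqrt_pos.2 hx)
  field_simp

lemma continuous_qsum : Continuous (fun y : EuclideanSpace ℝ (Fin n) =>
    ∑ i, (y i - z i) ^ 2) := by
  apply continuous_finset_sum
  intro i _
  exact (((EuclideanSpace.proj (𝕜 := ℝ) (i := i)).continuous).sub continuous_const).pow 2

lemma pd2_W {x : EuclideanSpace ℝ (Fin n)} (hx : 0 < c - ∑ i, (x i - z i) ^ 2) (i j : Fin n) :
    pd2 (fun y : EuclideanSpace ℝ (Fin n) => Real.sqrt (c - ∑ k, (y k - z k) ^ 2)) i j x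
      = -(if i = j then 1 else 0) / Real.sqrt (c - ∑ k, (x k - z k) ^ 2)
        - (x i - z i) * (x j - z j) / (Real.sqrt (c - ∑ k, (x k - z k) ^ 2)) ^ 3 := by
  set W : EuclideanSpace ℝ (Fin n) → ℝ :=
    fun y => Real.sqrt (c - ∑ k, (y k - z k) ^ 2) with hWdef
  have hU : IsOpen {y : EuclideanSpace ℝ (Fin n) | 0 < c - ∑ k, (y k - z k) ^ 2} :=
    isOpen_lt continuous_const (continuous_const.sub (continuous_qsum z))
  have hWx : 0 < W x := Real.sqrt_pos.2 hx
  have heq : (fun y => fderiv ℝ W y (EuclideanSpace.single j 1))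
      =ᶠ[nhds x] (fun y => -(y j - z j) / W y) := by
    filter_upwards [hU.mem_nhds hx] with y hy
    exact pd_W z c hy j
  rw [pd2, heq.fderiv_eq]
  -- derivative of y ↦ -(y j - z j) / W y = (-(y j - z j)) * (W y)⁻¹
  have hN : HasFDerivAt (fun y : EuclideanSpace ℝ (Fin n) => -(y j - z j))
      (-(EuclideanSpace.proj j : EuclideanSpace ℝ (Fin n) →L[ℝ] ℝ)) x := by
    have h1 : HasFDerivAt (fun y : EuclideanSpace ℝ (Fin n) => y j)
        (EuclideanSpace.proj j : EuclideanSpace ℝ (Fin n) →L[ℝ] ℝ) x := by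
      have h := (EuclideanSpace.proj (𝕜 := ℝ) (i := j)).hasFDerivAt (x := x)
      exact h
    exact (h1.sub_const (z j)).neg
  have hD := hasFDerivAt_W z c hx
  have hWinv : HasFDerivAt (fun y => (W y)⁻¹)
      ((-(W x ^ 2)⁻¹) • ((1 / (2 * W x)) •
        (∑ k, (-(2 * (x k - z k))) • (EuclideanSpace.proj k :
          EuclideanSpace ℝ (Fin n) →L[ℝ] ℝ)))) x :=
    (hasDerivAt_inv (ne_of_gt hWx)).comp_hasFDerivAt x hD
  have hprod := hN.fun_mul hWinv
  have heq2 : (fun y => -(y j - z j) / W y) = (fun y => (-(y j - z j)) * (W y)⁻¹) := by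
    funext y; rw [div_eq_mul_inv]
  rw [heq2, hprod.fderiv]
  have hval : (∑ k, (-(2 * (x k - z k))) • (EuclideanSpace.proj k :
      EuclideanSpace ℝ (Fin n) →L[ℝ] ℝ)) (EuclideanSpace.single i 1)
      = -(2 * (x i - z i)) := by
    rw [ContinuousLinearMap.sum_apply]
    have hterm : ∀ k : Fin n, ((-(2 * (x k - z k))) • (EuclideanSpace.proj k :
        EuclideanSpace ℝ (Fin n) →L[ℝ] ℝ)) (EuclideanSpace.single i 1)
        = (if k = i then -(2 * (x i - z i)) else 0) := by
      intro k
      rw [ContinuousLinearMap.smul_apply, proj_single, smul_eq_mul]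
      rcases eq_or_ne k i with rfl | hk
      · simp
      · simp [hk]
    rw [Finset.sum_congr rfl fun k _ => hterm k, Finset.sum_ite_eq']
    simp
  simp only [ContinuousLinearMap.add_apply, ContinuousLinearMap.smul_apply,
    ContinuousLinearMap.neg_apply, hval, proj_single, smul_eq_mul]
  have hWne : W x ≠ 0 := ne_of_gt hWx
  rcases eq_or_ne j i with rfl | hij
  · simp only [if_pos rfl]
    field_simp
    ring
  · simp only [if_neg hij, if_neg (Ne.symm hij)]
    field_simp
    ring


lemma FHMG_W {x : EuclideanSpace ℝ (Fin n)} (hx : 0 < c - ∑ i, (x i - z i) ^ 2) :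
    FHMG (fun y : EuclideanSpace ℝ (Fin n) => Real.sqrt (c - ∑ k, (y k - z k) ^ 2)) x = 0 := by
  set Wf : EuclideanSpace ℝ (Fin n) → ℝ :=
    fun y => Real.sqrt (c - ∑ k, (y k - z k) ^ 2) with hWf
  set S : ℝ := ∑ k, (x k - z k) ^ 2 with hSdef
  set W : ℝ := Real.sqrt (c - S) with hWdef
  have hx' : 0 < c - S := hx
  have hW : 0 < W := Real.sqrt_pos.2 hx'
  have hWne : W ≠ 0 := ne_of_gt hW
  have hpd : ∀ i, pd Wf i x = -(x i - z i) / W := fun i => pd_W z c hx i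
  have hpd2 : ∀ i j, pd2 Wf i j x
      = -(if i = j then 1 else 0) / W - (x i - z i) * (x j - z j) / W ^ 3 :=
    fun i j => pd2_W z c hx i j
  have c1 : ∑ i, pd2 Wf i i x = -(n : ℝ) / W - S / W ^ 3 := by
    have h1 : ∀ i : Fin n, pd2 Wf i i x = -(1:ℝ) / W - (x i - z i) ^ 2 / W ^ 3 := by
      intro i
      rw [hpd2 i i, if_pos rfl, sq]
    rw [Finset.sum_congr rfl fun i _ => h1 i, Finset.sum_sub_distrib, Finset.sum_const,
      Finset.card_univ, Fintype.card_fin, ← Finset.sum_div, ← hSdef]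
    ring
  have c2 : ∑ i, (pd Wf i x) ^ 2 = S / W ^ 2 := by
    have h1 : ∀ i : Fin n, (pd Wf i x) ^ 2 = (x i - z i) ^ 2 / W ^ 2 := by
      intro i
      rw [hpd i]
      field_simp
    rw [Finset.sum_congr rfl fun i _ => h1 i, ← Finset.sum_div, ← hSdef]
  have c3 : ∑ i, ∑ j, pd Wf i x * pd Wf j x * pd2 Wf i j x = -S / W ^ 3 - S ^ 2 / W ^ 5 := by
    have h1 : ∀ i j : Fin n, pd Wf i x * pd Wf j x * pd2 Wf i j x
        = (if i = j then -((x i - z i) * (x j - z j)) / W ^ 3 else 0)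
          - (x i - z i) ^ 2 * (x j - z j) ^ 2 / W ^ 5 := by
      intro i j
      rw [hpd i, hpd j, hpd2 i j]
      rcases eq_or_ne i j with rfl | hij
      · rw [if_pos rfl, if_pos rfl]
        field_simp
      · rw [if_neg hij, if_neg hij]
        field_simp
        ring
    have h2 : ∀ i : Fin n, ∑ j, pd Wf i x * pd Wf j x * pd2 Wf i j x
        = -((x i - z i) * (x i - z i)) / W ^ 3 - (x i - z i) ^ 2 * S / W ^ 5 := by
      intro i
      rw [Finset.sum_congr rfl fun j _ => h1 i j, Finset.sum_sub_distrib,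
        Finset.sum_ite_eq]
      simp only [Finset.mem_univ, if_true]
      congr 1
      rw [← Finset.sum_div, ← Finset.mul_sum, ← hSdef]
    rw [Finset.sum_congr rfl fun i _ => h2 i, Finset.sum_sub_distrib]
    have e1 : ∑ i, -((x i - z i) * (x i - z i)) / W ^ 3 = -S / W ^ 3 := by
      rw [← Finset.sum_div]
      congr 1
      rw [hSdef, ← Finset.sum_neg_distrib]
      exact Finset.sum_congr rfl fun i _ => by ring
    have e2 : ∑ i, (x i - z i) ^ 2 * S / W ^ 5 = S ^ 2 / W ^ 5 := by
      rw [← Finset.sum_div, ← Finset.sum_mul, ← hSdef, sq]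
    rw [e1, e2]
  have hWx : Wf x = W := rfl
  rw [FHMG, c1, c2, c3, hWx]
  have hden : (0:ℝ) < 1 + S / W ^ 2 := by
    have hS0 : 0 ≤ S := Finset.sum_nonneg fun i _ => sq_nonneg _
    positivity
  have hWS : W ^ 2 + S ≠ 0 := by
    have hS0 : 0 ≤ S := Finset.sum_nonneg fun i _ => sq_nonneg _
    exact ne_of_gt (by linarith [pow_pos hW 2])
  field_simp
  ring

end W

/-- Auxiliary: the squared distance in coordinates. -/
lemma dist_sq_eq {n : ℕ} (p z : EuclideanSpace ℝ (Fin n)) :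
    dist p z ^ 2 = ∑ k, (p k - z k) ^ 2 := by
  rw [EuclideanSpace.dist_eq, Real.sq_sqrt (Finset.sum_nonneg fun k _ => sq_nonneg _)]
  exact Finset.sum_congr rfl fun k _ => by rw [Real.dist_eq, sq_abs]

/-- The comparison principle against the hemisphere barrier. -/
lemma comparison_hemisphere {n : ℕ} (hn : 2 ≤ n) (Ω : Set (EuclideanSpace ℝ (Fin n)))
    (hΩo : IsOpen Ω) (hΩb : Bornology.IsBounded Ω)
    (z : EuclideanSpace ℝ (Fin n)) (R : ℝ)
    (hzsub : Ω ⊆ Metric.ball z R)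
    (u : EuclideanSpace ℝ (Fin n) → ℝ)
    (hcont : ContinuousOn u (closure Ω)) (hsmooth : ContDiffOn ℝ (⊤ : ℕ∞) u Ω)
    (hbd : ∀ x ∈ frontier Ω, u x = 0)
    (heq : ∀ x ∈ Ω, FHMG u x = 0) :
    ∀ x ∈ closure Ω, u x ≤ Real.sqrt (R ^ 2 - ∑ k, (x k - z k) ^ 2) := by
  intro x hxcl
  set Wf : EuclideanSpace ℝ (Fin n) → ℝ :=
    fun p => Real.sqrt (R ^ 2 - ∑ k, (p k - z k) ^ 2) with hWfdef
  have hΩU : ∀ p ∈ Ω, 0 < R ^ 2 - ∑ k, (p k - z k) ^ 2 := by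
    intro p hp
    have h1 : dist p z < R := by
      have := hzsub hp
      rwa [Metric.mem_ball] at this
    have h2 := dist_sq_eq p z
    nlinarith [dist_nonneg (x := p) (y := z)]
  have hKc : IsCompact (closure Ω) :=
    Metric.isCompact_of_isClosed_isBounded isClosed_closure hΩb.closure
  have hWcont : Continuous Wf :=
    Real.continuous_sqrt.comp (continuous_const.sub (continuous_qsum z))
  set φ : EuclideanSpace ℝ (Fin n) → ℝ := fun p => u p - Wf p with hφdef
  have hφcont : ContinuousOn φ (closure Ω) := hcont.sub hWcont.continuousOn
  obtain ⟨x₀, hx₀K, hmaxon⟩ := hKc.exists_isMaxOn ⟨x, hxcl⟩ hφcont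
  suffices h : φ x₀ ≤ 0 by
    have h2 : φ x ≤ φ x₀ := hmaxon hxcl
    have : u x - Wf x ≤ 0 := by calc u x - Wf x = φ x := rfl
                                    _ ≤ φ x₀ := h2
                                    _ ≤ 0 := h
    linarith
  by_contra hpos0
  push_neg at hpos0
  -- the max point is interior
  have hx₀Ω : x₀ ∈ Ω := by
    rcases (closure_eq_self_union_frontier Ω ▸ hx₀K) with h1 | h1
    · exact h1
    · exfalso
      have : φ x₀ = -(Wf x₀) := by rw [hφdef]; simp [hbd x₀ h1]
      have := Real.sqrt_nonneg (R ^ 2 - ∑ k, (x₀ k - z k) ^ 2)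
      simp only [hφdef] at hpos0
      rw [hbd x₀ h1] at hpos0
      linarith
  have hgz : 0 < R ^ 2 - ∑ k, (x₀ k - z k) ^ 2 := hΩU x₀ hx₀Ω
  have hW₀ : 0 < Wf x₀ := Real.sqrt_pos.2 hgz
  have hu₀ : Wf x₀ < u x₀ := by
    simp only [hφdef] at hpos0
    linarith
  have hmaxloc : IsLocalMax φ x₀ :=
    hmaxon.isLocalMax (Filter.mem_of_superset (hΩo.mem_nhds hx₀Ω) subset_closure)
  -- smoothness at the max point
  have hu2 : ContDiffAt ℝ 2 u x₀ := (hsmooth.contDiffAt (hΩo.mem_nhds hx₀Ω)).of_le (by exact WithTop.coe_le_coe.mpr le_top)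
  have hqCD : ContDiff ℝ 2 (fun p : EuclideanSpace ℝ (Fin n) =>
      R ^ 2 - ∑ k, (p k - z k) ^ 2) := by
    apply ContDiff.sub contDiff_const
    apply ContDiff.sum
    intro k _
    have h1 : ContDiff ℝ 2 (fun p : EuclideanSpace ℝ (Fin n) => p k) :=
      (EuclideanSpace.proj (𝕜 := ℝ) (i := k)).contDiff
    exact (h1.sub contDiff_const).pow 2
  have hW2 : ContDiffAt ℝ 2 Wf x₀ :=
    (Real.contDiffAt_sqrt (ne_of_gt hgz)).comp x₀ hqCD.contDiffAt
  have hφ2 : ContDiffAt ℝ 2 φ x₀ := hu2.sub hW2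
  -- first-order condition
  have hdu : DifferentiableAt ℝ u x₀ := hu2.differentiableAt (by norm_num)
  have hdW : DifferentiableAt ℝ Wf x₀ := (hasFDerivAt_W z (R ^ 2) hgz).differentiableAt
  have hgrad0 : fderiv ℝ φ x₀ = 0 := hmaxloc.fderiv_eq_zero
  have hfderiv_eq : fderiv ℝ u x₀ = fderiv ℝ Wf x₀ := by
    have h1 : fderiv ℝ φ x₀ = fderiv ℝ u x₀ - fderiv ℝ Wf x₀ := fderiv_fun_sub hdu hdW
    rw [hgrad0] at h1
    exact (sub_eq_zero.mp h1.symm)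
  have hpdeq : ∀ i, pd Wf i x₀ = pd u i x₀ := fun i => by rw [pd, pd, hfderiv_eq]
  -- second-order decomposition
  have hpd2dec : ∀ i j, pd2 φ i j x₀ = pd2 u i j x₀ - pd2 Wf i j x₀ := by
    intro i j
    have heqj : (fun p => fderiv ℝ φ p (EuclideanSpace.single j 1))
        =ᶠ[nhds x₀] (fun p => fderiv ℝ u p (EuclideanSpace.single j 1)
          - fderiv ℝ Wf p (EuclideanSpace.single j 1)) := by
      filter_upwards [hΩo.eventually_mem hx₀Ω] with p hp
      have hdu' : DifferentiableAt ℝ u p :=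
        ((hsmooth.contDiffAt (hΩo.mem_nhds hp)).of_le (by exact WithTop.coe_le_coe.mpr le_top)).differentiableAt
          (by norm_num : (2 : WithTop ℕ∞) ≠ 0)
      have hdW' : DifferentiableAt ℝ Wf p :=
        (hasFDerivAt_W z (R ^ 2) (hΩU p hp)).differentiableAt
      rw [show fderiv ℝ φ p = fderiv ℝ u p - fderiv ℝ Wf p from fderiv_fun_sub hdu' hdW']
      rw [ContinuousLinearMap.sub_apply]
    rw [pd2, pd2, pd2, heqj.fderiv_eq,
      fderiv_fun_sub (pd_differentiableAt hu2 j) (pd_differentiableAt hW2 j),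
      ContinuousLinearMap.sub_apply]
  -- the two equations
  have hequ := heq x₀ hx₀Ω
  have heqW : FHMG Wf x₀ = 0 := FHMG_W z (R ^ 2) hgz
  -- quadratic form condition and algebraic inequality
  have hquad : ∀ v : Fin n → ℝ,
      ∑ i, v i * ∑ j, v j * pd2 φ j i x₀ ≤ 0 := by
    intro v
    exact quadform_nonpos_of_isLocalMax hφ2 hmaxloc v
  have hkey := trace_ineq_of_quadform_nonpos
    (M := fun a b => pd2 φ a b x₀) (p := fun i => pd u i x₀) hquad
  -- unfold the equations
  rw [FHMG] at hequ heqW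
  simp only [hpdeq] at heqW
  simp only [hpd2dec] at hkey
  set S : ℝ := ∑ i, (pd u i x₀) ^ 2 with hSdef
  set Tu : ℝ := ∑ i, pd2 u i i x₀ with hTudef
  set TW : ℝ := ∑ i, pd2 Wf i i x₀ with hTWdef
  set Qu : ℝ := ∑ i, ∑ j, pd u i x₀ * pd u j x₀ * pd2 u i j x₀ with hQudef
  set QW : ℝ := ∑ i, ∑ j, pd u i x₀ * pd u j x₀ * pd2 Wf i j x₀ with hQWdef
  have hkey2 : (Tu - TW) - (Qu - QW) / (1 + S) ≤ 0 := by
    have e1 : ∑ i, (pd2 u i i x₀ - pd2 Wf i i x₀) = Tu - TW := by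
      rw [Finset.sum_sub_distrib]
    have e2 : ∑ i, ∑ j, pd u i x₀ * pd u j x₀ * (pd2 u i j x₀ - pd2 Wf i j x₀)
        = Qu - QW := by
      rw [hQudef, hQWdef, ← Finset.sum_sub_distrib]
      apply Finset.sum_congr rfl
      intro i _
      rw [← Finset.sum_sub_distrib]
      exact Finset.sum_congr rfl fun j _ => by ring
    rw [e1, e2] at hkey
    exact hkey
  have hS0 : 0 ≤ S := Finset.sum_nonneg fun i _ => sq_nonneg _
  have h1S : (0:ℝ) < 1 + S := by linarith
  have hsubdiv : (Qu - QW) / (1 + S) = Qu / (1 + S) - QW / (1 + S) := sub_div _ _ _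
  rw [hsubdiv] at hkey2
  -- contradiction
  have hn0 : (0:ℝ) < (n : ℝ) := by
    have : 0 < n := by omega
    exact_mod_cast this
  have hltdiv : (n : ℝ) / u x₀ < (n : ℝ) / Wf x₀ :=
    div_lt_div_of_pos_left hn0 hW₀ hu₀
  linarith [hequ, heqW, hkey2, hltdiv]

theorem pointwise_sqrt_bound_exterior_sphere
    {n : ℕ} (hn : 2 ≤ n) (Ω : Set (EuclideanSpace ℝ (Fin n)))
    (hΩo : IsOpen Ω) (hΩc : Convex ℝ Ω) (hΩb : Bornology.IsBounded Ω)
    (hne : Ω.Nonempty)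
    (R : ℝ) (hR : 0 < R)
    (hext : ∀ x ∈ frontier Ω, ∃ y : EuclideanSpace ℝ (Fin n),
      Ω ⊆ Metric.ball y R ∧ x ∈ Metric.sphere y R)
    (u : EuclideanSpace ℝ (Fin n) → ℝ)
    (hcont : ContinuousOn u (closure Ω)) (hsmooth : ContDiffOn ℝ (⊤ : ℕ∞) u Ω)
    (hconc : ConcaveOn ℝ Ω u) (hpos : ∀ x ∈ Ω, 0 < u x)
    (hbd : ∀ x ∈ frontier Ω, u x = 0)
    (heq : ∀ x ∈ Ω, FHMG u x = 0) :
    ∀ y ∈ Ω, u y ≤ Real.sqrt (2 * R) * (Metric.infDist y (frontier Ω)) ^ ((1 : ℝ) / 2) := by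
  intro y hy
  haveI : Nonempty (Fin n) := ⟨⟨0, by omega⟩⟩
  haveI : Nontrivial (EuclideanSpace ℝ (Fin n)) := by
    refine ⟨0, EuclideanSpace.single ⟨0, by omega⟩ (1:ℝ), ?_⟩
    intro hcon
    have := congrArg (fun v : EuclideanSpace ℝ (Fin n) => v ⟨0, by omega⟩) hcon.symm
    simp [EuclideanSpace.single_apply] at this
  have hKc : IsCompact (closure Ω) :=
    Metric.isCompact_of_isClosed_isBounded isClosed_closure hΩb.closure
  have hfr_ne : (frontier Ω).Nonempty := by
    by_contra h
    rw [Set.not_nonempty_iff_eq_empty] at h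
    have hclopen : IsClopen Ω := by
      rw [← isClopen_iff_frontier_eq_empty] at h
      exact h
    rcases isClopen_iff.mp hclopen with h1 | h2
    · exact (Set.nonempty_iff_ne_empty.mp hne) h1
    · have hcompuniv : IsCompact (Set.univ : Set (EuclideanSpace ℝ (Fin n))) := by
        have : closure Ω = Set.univ := by rw [h2, closure_univ]
        rw [← this]
        exact hKc
      exact hcompuniv.ne_univ rfl
  have hKfr : IsCompact (frontier Ω) :=
    hKc.of_isClosed_subset isClosed_frontier frontier_subset_closure
  obtain ⟨xb, hxb, hdisteq⟩ := hKfr.exists_infDist_eq_dist hfr_ne y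
  obtain ⟨z, hzsub, hzsph⟩ := hext xb hxb
  set d : ℝ := Metric.infDist y (frontier Ω) with hddef
  have hd0 : 0 ≤ d := Metric.infDist_nonneg
  have hcomp := comparison_hemisphere hn Ω hΩo hΩb z R hzsub u hcont hsmooth hbd heq
    y (subset_closure hy)
  have hyz : dist y z < R := by
    have := hzsub hy
    rwa [Metric.mem_ball] at this
  have hxbz : dist xb z = R := by
    have := hzsph
    rwa [Metric.mem_sphere] at this
  have htri : R ≤ d + dist y z := by
    calc R = dist xb z := hxbz.symm
      _ ≤ dist xb y + dist y z := dist_triangle _ _ _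
      _ = d + dist y z := by rw [hdisteq, dist_comm]
  have hbound : R ^ 2 - ∑ k, (y k - z k) ^ 2 ≤ 2 * R * d := by
    rw [← dist_sq_eq y z]
    nlinarith [dist_nonneg (x := y) (y := z), htri, hyz]
  calc u y ≤ Real.sqrt (R ^ 2 - ∑ k, (y k - z k) ^ 2) := hcomp
    _ ≤ Real.sqrt (2 * R * d) := Real.sqrt_le_sqrt hbound
    _ = Real.sqrt (2 * R) * Real.sqrt d := Real.sqrt_mul (by positivity) d
    _ = Real.sqrt (2 * R) * d ^ ((1:ℝ) / 2) := by rw [Real.sqrt_eq_rpow d]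
end

section
/- For n ≥ 2 and 0 < x_n ≤ 1, the function U(x_n) = (n+1)²·x_n^{1/(n+1)} − x_n^{2−1/(n+1)} satisfies the derivative bounds (U')² ≤ (n+1)²·x_n^{−2n/(n+1)} − 4n + 2 and U·U'' ≤ −n(n+1)²·x_n^{−2n/(n+1)} − 2n² + 2. -/
set_option maxHeartbeats 800000

theorem derivative_bounds_for_slab_supersolution
    (n : ℕ) (hn : 2 ≤ n)
    (U : ℝ → ℝ)
    (hU : ∀ t : ℝ, U t = ((n : ℝ) + 1) ^ 2 * t ^ ((1 : ℝ) / (n + 1)) - t ^ (2 - (1 : ℝ) / (n + 1))) :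
    ∀ t ∈ Set.Ioc (0 : ℝ) 1,
      (deriv U t) ^ 2 ≤ ((n : ℝ) + 1) ^ 2 * t ^ (-(2 * (n : ℝ)) / (n + 1)) - 4 * n + 2 ∧
      U t * deriv (deriv U) t
        ≤ -(n : ℝ) * ((n : ℝ) + 1) ^ 2 * t ^ (-(2 * (n : ℝ)) / (n + 1)) - 2 * (n : ℝ) ^ 2 + 2 := by
  intro t ht
  obtain ⟨ht0, ht1⟩ := ht
  set c : ℝ := (n : ℝ) + 1 with hc
  have hn3 : (3:ℝ) ≤ c := by
    have : (2:ℝ) ≤ (n:ℝ) := by exact_mod_cast hn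
    rw [hc]; linarith
  have hc0 : (0:ℝ) < c := by linarith
  set a : ℝ := 1 / c with ha
  have hac : a * c = 1 := by rw [ha]; exact one_div_mul_cancel hc0.ne'
  have ha0 : 0 < a := by positivity
  have ha1 : a ≤ 1/3 := by
    rw [ha, div_le_div_iff₀ hc0 (by norm_num)]; linarith
  have hUeq : U = fun x => c^2 * x ^ a - x ^ (2 - a) := funext hU
  have hD : ∀ s : ℝ, 0 < s → HasDerivAt U (c * s^(a-1) - (2-a) * s^(1-a)) s := by
    intro s hs
    have h1 : HasDerivAt (fun x:ℝ => x ^ a) (a * s ^ (a-1)) s :=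
      Real.hasDerivAt_rpow_const (Or.inl hs.ne')
    have h2 : HasDerivAt (fun x:ℝ => x ^ (2-a)) ((2-a) * s ^ (2-a-1)) s :=
      Real.hasDerivAt_rpow_const (Or.inl hs.ne')
    have h3 := (h1.const_mul (c^2)).sub h2
    rw [hUeq]
    refine h3.congr_deriv ?_
    have he : (2:ℝ) - a - 1 = 1 - a := by ring
    rw [he]
    have h4 : c^2 * (a * s^(a-1)) = (a * c) * (c * s^(a-1)) := by ring
    rw [h4, hac]; ring
  have hderiv : deriv U t = c * t^(a-1) - (2-a) * t^(1-a) := (hD t ht0).deriv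
  have hV : HasDerivAt (fun x:ℝ => c * x^(a-1) - (2-a) * x^(1-a))
      (c * ((a-1) * t^(a-1-1)) - (2-a) * ((1-a) * t^(1-a-1))) t := by
    have h1 : HasDerivAt (fun x:ℝ => x ^ (a-1)) ((a-1) * t ^ (a-1-1)) t :=
      Real.hasDerivAt_rpow_const (Or.inl ht0.ne')
    have h2 : HasDerivAt (fun x:ℝ => x ^ (1-a)) ((1-a) * t ^ (1-a-1)) t :=
      Real.hasDerivAt_rpow_const (Or.inl ht0.ne')
    exact (h1.const_mul c).sub (h2.const_mul (2-a))
  have hEv : deriv U =ᶠ[nhds t] fun x => c * x^(a-1) - (2-a) * x^(1-a) := by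
    filter_upwards [eventually_gt_nhds ht0] with s hs
    exact (hD s hs).deriv
  have hderiv2 : deriv (deriv U) t
      = c * ((a-1) * t^(a-1-1)) - (2-a) * ((1-a) * t^(1-a-1)) := by
    rw [hEv.deriv_eq]
    exact hV.deriv
  have hE : t ^ (-(2 * (n : ℝ)) / ((n:ℝ) + 1)) = t^(a-1) * t^(a-1) := by
    rw [← Real.rpow_add ht0]
    congr 1
    rw [ha, hc]
    field_simp
    ring
  have hP2 : t^a * t^(a-1-1) = t^(a-1) * t^(a-1) := by
    rw [← Real.rpow_add ht0, ← Real.rpow_add ht0]; ring_nf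
  have hP3 : t^a * t^(1-a-1) = 1 := by
    rw [← Real.rpow_add ht0, show a+(1-a-1) = (0:ℝ) by ring, Real.rpow_zero]
  have hP4 : t^(2-a) * t^(a-1-1) = 1 := by
    rw [← Real.rpow_add ht0, show (2:ℝ)-a+(a-1-1) = 0 by ring, Real.rpow_zero]
  have hP5 : t^(2-a) * t^(1-a-1) = t^(1-a) * t^(1-a) := by
    rw [← Real.rpow_add ht0, ← Real.rpow_add ht0]; ring_nf
  have hP1 : t^(a-1) * t^(1-a) = 1 := by
    rw [← Real.rpow_add ht0, show a-1+(1-a) = (0:ℝ) by ring, Real.rpow_zero]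
  have hQ0 : (0:ℝ) ≤ t^(1-a) := (Real.rpow_pos_of_pos ht0 _).le
  have hQ1 : t^(1-a) ≤ 1 := Real.rpow_le_one ht0.le ht1 (by linarith)
  set A : ℝ := t^(a-1) with hA
  set B : ℝ := t^(1-a) with hB
  have hA0 : 0 < A := Real.rpow_pos_of_pos ht0 _
  have hBB0 : 0 ≤ B * B := mul_nonneg hQ0 hQ0
  have hBB1 : B * B ≤ 1 := by nlinarith
  clear_value a c A B
  clear hD hV hEv hUeq
  rw [← hc] at hE
  constructor
  · rw [hderiv, hE]
    have expand : (c * A - (2-a) * B)^2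
        = c^2 * (A * A) - 2 * c * (2-a) * (A * B) + (2-a)^2 * (B * B) := by ring
    rw [expand, hP1]
    have h2c : 2 * c * (2-a) * 1 = 4 * c - 2 := by
      have : 2 * c * (2-a) = 4 * c - 2 * (a * c) := by ring
      rw [this, hac]; ring
    rw [h2c, hc]
    have h22 : (2-a)^2 ≤ 4 := by nlinarith
    have hBB : (2-a)^2 * (B*B) ≤ 4 := by
      calc (2-a)^2 * (B*B) ≤ 4 * 1 := mul_le_mul h22 hBB1 hBB0 (by norm_num)
        _ = 4 := by ring
    linarith [hBB]
  · rw [hU t, hderiv2]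
    have expand : (c^2 * t^a - t^(2-a)) * (c * ((a-1) * t^(a-1-1)) - (2-a) * ((1-a) * t^(1-a-1)))
        = c^3 * (a-1) * (t^a * t^(a-1-1)) - c^2 * (2-a) * (1-a) * (t^a * t^(1-a-1))
          - c * (a-1) * (t^(2-a) * t^(a-1-1)) + (2-a) * (1-a) * (t^(2-a) * t^(1-a-1)) := by
      ring
    rw [expand, hP2, hP3, hP4, hP5, hE]
    have hkey1 : c^3 * (a-1) = -((n:ℝ)) * c^2 := by
      have h5 : c * (a - 1) = a * c - c := by ring
      have : c^3 * (a-1) = c^2 * (c * (a-1)) := by ring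
      rw [this, h5, hac, hc]; ring
    have hkey2 : c^2 * (2-a) * (1-a) = 2 * (n:ℝ)^2 + (n:ℝ) := by
      have : c^2 * (2-a) * (1-a) = 2 * c^2 - 3 * (a*c) * c + (a*c)^2 := by ring
      rw [this, hac, hc]; ring
    have hkey3 : c * (a-1) * 1 = -((n:ℝ)) := by
      have : c * (a-1) = a * c - c := by ring
      rw [mul_one, this, hac, hc]; ring
    rw [hkey1, hkey2, hkey3]
    clear hderiv hderiv2 expand hkey1 hkey2 hkey3 hP2 hP3 hP4 hP5 hU
    have h22 : (2-a) * (1-a) ≤ 2 := by nlinarith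
    have h220 : 0 ≤ (2-a) * (1-a) := by nlinarith
    have hBB : (2-a) * (1-a) * (B*B) ≤ 2 := by
      calc (2-a) * (1-a) * (B*B) ≤ 2 * 1 := mul_le_mul h22 hBB1 hBB0 (by norm_num)
        _ = 2 := by ring
    linarith
end
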